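/- arXiv:1702.04777 — 2 statements merged into one kernel-verified Lean document; each statement's English description precedes it below -/
import Mathlib

section
/- Fix real constants μ0 > 0 and H > 0, and real numbers h, η with η + h = H. Let Φ* : [−h, η] → ℝ be twice continuously differentiable and satisfy the homogeneous boundary conditions (Φ*)'(η) − μ0·Φ*(η) = 0 and (Φ*)'(−h) = 0. For n ≥ 1 define φ_n = (∫_{−h}^{η} Z_n² dz)^{−1} · ∫_{−h}^{η} Φ*(z)·Z_n(z) dz. Then for every n ≥ 1 one has the exact representation φ_n = −k_n^{−2}·(∫_{−h}^{η} Z_n² dz)^{−1} · ∫_{−h}^{η} (Φ*)''(z)·Z_n(z) dz, and there exists a constant A₂ (independent of n) such that |φ_n| ≤ A₂·n^{−2} for all n ≥ 1. -/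
/-!
`Zₙ` solves `Z'' = -kₙ² Z` with the boundary conditions `Z'(-h) = 0`, `Z'(η) = μ0 Z(η)` imposed
on `Φ*`, so Green's identity moves both derivatives from `Zₙ` onto `Φ*` without boundary terms:
`∫ Φ*'' Zₙ = -kₙ² ∫ Φ* Zₙ`. For the decay, `kₙ ≥ nπ/(2H)` makes `kₙ⁻²` of order `n⁻²`, while
`|Zₙ| ≤ |cos (kₙ H)|⁻¹ ≤ 1 + |tan (kₙ H)| = 1 + μ0/kₙ` and
`∫ Zₙ² ≥ ∫ cos² (kₙ (z + h)) ≥ H/2 - 1/(2kₙ) ≥ H/2 - H/π` bound `|Zₙ|` above and `∫ Zₙ²`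
away from `0` uniformly in `n`.
-/

open Real MeasureTheory intervalIntegral Set

theorem integral_deriv2_mul_sub_integral_mul_deriv2 {a b : ℝ} (hab : a ≤ b)
    {f f' f'' g g' g'' : ℝ → ℝ}
    (hf : ∀ x ∈ Icc a b, HasDerivWithinAt f (f' x) (Icc a b) x)
    (hf' : ∀ x ∈ Icc a b, HasDerivWithinAt f' (f'' x) (Icc a b) x)
    (hg : ∀ x ∈ Icc a b, HasDerivWithinAt g (g' x) (Icc a b) x)
    (hg' : ∀ x ∈ Icc a b, HasDerivWithinAt g' (g'' x) (Icc a b) x)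
    (hf''c : ContinuousOn f'' (Icc a b)) (hg''c : ContinuousOn g'' (Icc a b)) :
    (∫ x in a..b, f'' x * g x) - ∫ x in a..b, f x * g'' x =
      (f' b * g b - f b * g' b) - (f' a * g a - f a * g' a) := by
  have hfc : ContinuousOn f (Icc a b) := fun x hx => (hf x hx).continuousWithinAt
  have hgc : ContinuousOn g (Icc a b) := fun x hx => (hg x hx).continuousWithinAt
  have hW : ∀ x ∈ Icc a b, HasDerivWithinAt (fun x => f' x * g x - f x * g' x)
      (f'' x * g x - f x * g'' x) (Icc a b) x := fun x hx =>
    (((hf' x hx).mul (hg x hx)).sub ((hf x hx).mul (hg' x hx))).congr_deriv (by ring)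
  have hint₁ : IntervalIntegrable (fun x => f'' x * g x) volume a b :=
    (hf''c.mul hgc).intervalIntegrable_of_Icc hab
  have hint₂ : IntervalIntegrable (fun x => f x * g'' x) volume a b :=
    (hfc.mul hg''c).intervalIntegrable_of_Icc hab
  rw [← integral_sub hint₁ hint₂]
  exact integral_eq_sub_of_hasDeriv_right_of_le hab (fun x hx => (hW x hx).continuousWithinAt)
    (fun x hx => ((hW x (Ioo_subset_Icc_self hx)).hasDerivAt
      (Icc_mem_nhds hx.1 hx.2)).hasDerivWithinAt)
    (hint₁.sub hint₂)

theorem integral_deriv2_mul_eigenfunction {a b μ lam : ℝ} (hab : a ≤ b)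
    {f f' f'' g g' : ℝ → ℝ}
    (hf : ∀ x ∈ Icc a b, HasDerivWithinAt f (f' x) (Icc a b) x)
    (hf' : ∀ x ∈ Icc a b, HasDerivWithinAt f' (f'' x) (Icc a b) x)
    (hg : ∀ x ∈ Icc a b, HasDerivWithinAt g (g' x) (Icc a b) x)
    (hg' : ∀ x ∈ Icc a b, HasDerivWithinAt g' (-lam * g x) (Icc a b) x)
    (hf''c : ContinuousOn f'' (Icc a b))
    (hfa : f' a = 0) (hga : g' a = 0) (hfb : f' b = μ * f b) (hgb : g' b = μ * g b) :
    ∫ x in a..b, f'' x * g x = -lam * ∫ x in a..b, f x * g x := by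
  have hgc : ContinuousOn g (Icc a b) := fun x hx => (hg x hx).continuousWithinAt
  have green := integral_deriv2_mul_sub_integral_mul_deriv2 hab hf hf' hg hg' hf''c
    (continuousOn_const.mul hgc)
  simp only [mul_left_comm (f _), intervalIntegral.integral_const_mul, hfa, hga, hfb, hgb] at green
  linear_combination green

theorem abs_inv_cos_le_one_add_abs_tan (x : ℝ) : |cos x|⁻¹ ≤ 1 + |tan x| := by
  rcases eq_or_ne (cos x) 0 with hc | hc
  · simp [hc, add_nonneg]
  have hpos : 0 < |cos x| := abs_pos.mpr hc
  have hone : 1 ≤ |cos x| + |sin x| := by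
    nlinarith [sin_sq_add_cos_sq x, sq_abs (sin x), sq_abs (cos x), abs_nonneg (sin x),
      abs_nonneg (cos x), abs_cos_le_one x, abs_sin_le_one x]
  rw [tan_eq_sin_div_cos, abs_div, inv_le_iff_one_le_mul₀ hpos]
  calc 1 ≤ |cos x| + |sin x| := hone
    _ = (1 + |sin x| / |cos x|) * |cos x| := by rw [add_mul, div_mul_cancel₀ _ hpos.ne', one_mul]

theorem integral_cos_mul_add_sq_ge {k : ℝ} (hk : 0 < k) (a b d : ℝ) :
    (b - a) / 2 - k⁻¹ / 2 ≤ ∫ x in a..b, cos (k * x + d) ^ 2 := by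
  rw [integral_comp_mul_add (fun x => cos x ^ 2) hk.ne', integral_cos_sq, smul_eq_mul]
  have hprod : ∀ u, |cos u * sin u| ≤ 1 / 2 := fun u => by
    have := abs_sin_le_one (2 * u)
    rw [sin_two_mul, abs_le] at this
    rw [abs_le]; constructor <;> linarith
  set P := cos (k * b + d) * sin (k * b + d)
  set Q := cos (k * a + d) * sin (k * a + d)
  have hPQ : -1 ≤ P - Q := by
    linarith [(abs_le.mp (hprod (k * b + d))).1, (abs_le.mp (hprod (k * a + d))).2]
  calc (b - a) / 2 - k⁻¹ / 2 = k⁻¹ * (-1) / 2 + (b - a) / 2 := by ring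
    _ ≤ k⁻¹ * (P - Q) / 2 + (b - a) / 2 := by gcongr
    _ = k⁻¹ * ((P - Q + (k * b + d) - (k * a + d)) / 2) := by field_simp; ring

theorem pos_and_inv_le_of_odd_mul_pi_div_lt {n : ℕ} (hn : 1 ≤ n) {H k : ℝ} (hH : 0 < H)
    (hk : (2 * (n : ℝ) - 1) * π / (2 * H) < k) : 0 < k ∧ k⁻¹ ≤ 2 * H / π / n := by
  have hn1 : (1 : ℝ) ≤ n := by exact_mod_cast hn
  have hlow : (n : ℝ) * π / (2 * H) ≤ k := le_trans (by gcongr; linarith) hk.le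
  have hpos : 0 < (n : ℝ) * π / (2 * H) := by positivity
  refine ⟨hpos.trans_le hlow, (inv_anti₀ hpos hlow).trans_eq ?_⟩
  field_simp

theorem abs_tan_eq_of_add_mul_tan_eq_zero {μ k x : ℝ} (hμ : 0 ≤ μ) (hk : 0 < k)
    (h : μ + k * tan x = 0) : |tan x| = μ * k⁻¹ := by
  have : tan x = -μ / k := by
    field_simp
    linarith
  rw [this, abs_div, abs_neg, abs_of_nonneg hμ, abs_of_pos hk, div_eq_mul_inv]

noncomputable def verticalMode (k h H z : ℝ) : ℝ := cos (k * (z + h)) / cos (k * H)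

section verticalMode

variable {k h H : ℝ}

theorem hasDerivAt_verticalMode (z : ℝ) :
    HasDerivAt (verticalMode k h H) (-k * sin (k * (z + h)) / cos (k * H)) z :=
  ((((hasDerivAt_id' z).add_const h).const_mul k).cos.div_const _).congr_deriv (by ring)

theorem hasDerivAt_verticalMode_deriv (z : ℝ) :
    HasDerivAt (fun z => -k * sin (k * (z + h)) / cos (k * H))
      (-k ^ 2 * verticalMode k h H z) z :=
  ((((hasDerivAt_id' z).add_const h).const_mul k).sin.const_mul (-k)).div_const _
    |>.congr_deriv (by rw [verticalMode]; ring)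

theorem abs_verticalMode_le (z : ℝ) : |verticalMode k h H z| ≤ 1 + |tan (k * H)| := by
  rw [verticalMode, abs_div, div_eq_mul_inv]
  exact (mul_le_of_le_one_left (inv_nonneg.mpr (abs_nonneg _)) (abs_cos_le_one _)).trans
    (abs_inv_cos_le_one_add_abs_tan _)

variable {η : ℝ}

theorem integral_verticalMode_sq_ge (hk : 0 < k) (hc : cos (k * H) ≠ 0) (hηh : η + h = H)
    (hab : -h ≤ η) :
    H / 2 - k⁻¹ / 2 ≤ ∫ z in (-h)..η, verticalMode k h H z ^ 2 := by
  have hcos : ∫ z in (-h)..η, verticalMode k h H z ^ 2 =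
      (cos (k * H) ^ 2)⁻¹ * ∫ z in (-h)..η, cos (k * z + k * h) ^ 2 := by
    rw [← intervalIntegral.integral_const_mul]
    congr 1 with z
    rw [verticalMode, div_pow, mul_add, div_eq_inv_mul]
  have hone : 1 ≤ (cos (k * H) ^ 2)⁻¹ :=
    one_le_inv₀ (pow_pos (abs_pos.mpr hc) 2 |>.trans_eq (sq_abs _)) |>.mpr (cos_sq_le_one _)
  calc H / 2 - k⁻¹ / 2 = (η - -h) / 2 - k⁻¹ / 2 := by rw [← hηh]; ring
    _ ≤ ∫ z in (-h)..η, cos (k * z + k * h) ^ 2 := integral_cos_mul_add_sq_ge hk _ _ _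
    _ ≤ _ := by
      rw [hcos]
      exact le_mul_of_one_le_left
        (intervalIntegral.integral_nonneg hab fun _ _ => sq_nonneg _) hone

theorem abs_integral_mul_verticalMode_le (hηh : η + h = H) (hab : -h ≤ η) {f : ℝ → ℝ} {B : ℝ}
    (hB : ∀ z ∈ Icc (-h) η, ‖f z‖ ≤ B) :
    |∫ z in (-h)..η, f z * verticalMode k h H z| ≤ B * (1 + |tan (k * H)|) * H := by
  have hH : |η - -h| = H := by rw [abs_of_nonneg (by linarith)]; linarith
  rw [← hH, ← Real.norm_eq_abs]
  refine intervalIntegral.norm_integral_le_of_norm_le_const fun z hz => ?_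
  rw [uIoc_of_le hab] at hz
  rw [norm_mul, Real.norm_eq_abs (verticalMode _ _ _ _)]
  exact mul_le_mul (hB z (Ioc_subset_Icc_self hz)) (abs_verticalMode_le z) (abs_nonneg _)
    ((norm_nonneg _).trans (hB z (Ioc_subset_Icc_self hz)))

theorem cos_ne_zero_of_add_mul_tan_eq_zero {μ : ℝ} (hμ : μ ≠ 0) (hdisp : μ + k * tan (k * H) = 0) :
    cos (k * H) ≠ 0 := by
  intro hc
  rw [tan_eq_sin_div_cos, hc, div_zero, mul_zero, add_zero] at hdisp
  exact hμ hdisp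

theorem integral_deriv2_mul_verticalMode {μ : ℝ} (hμ : μ ≠ 0) (hdisp : μ + k * tan (k * H) = 0)
    (hηh : η + h = H) (hab : -h ≤ η) {f f' f'' : ℝ → ℝ}
    (hf : ∀ z ∈ Icc (-h) η, HasDerivWithinAt f (f' z) (Icc (-h) η) z)
    (hf' : ∀ z ∈ Icc (-h) η, HasDerivWithinAt f' (f'' z) (Icc (-h) η) z)
    (hf''c : ContinuousOn f'' (Icc (-h) η)) (hfa : f' (-h) = 0) (hfb : f' η = μ * f η) :
    ∫ z in (-h)..η, f'' z * verticalMode k h H z =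
      -k ^ 2 * ∫ z in (-h)..η, f z * verticalMode k h H z := by
  have hc := cos_ne_zero_of_add_mul_tan_eq_zero hμ hdisp
  refine integral_deriv2_mul_eigenfunction hab hf hf'
    (fun z _ => (hasDerivAt_verticalMode z).hasDerivWithinAt)
    (fun z _ => (hasDerivAt_verticalMode_deriv z).hasDerivWithinAt) hf''c hfa ?_ hfb ?_
  · simp
  · rw [verticalMode, hηh, div_self hc, mul_one, mul_div_assoc, ← tan_eq_sin_div_cos]
    linarith

theorem abs_verticalMode_coefficient_le {μ : ℝ} (hμ : 0 < μ) (hk : 0 < k)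
    (hdisp : μ + k * tan (k * H) = 0) (hηh : η + h = H) (hab : -h ≤ η)
    (hcoer : 0 < H / 2 - k⁻¹ / 2) {f : ℝ → ℝ} {B : ℝ} (hB : ∀ z ∈ Icc (-h) η, ‖f z‖ ≤ B) :
    |-(k ^ 2)⁻¹ * (∫ z in (-h)..η, verticalMode k h H z ^ 2)⁻¹ *
        ∫ z in (-h)..η, f z * verticalMode k h H z| ≤
      (k⁻¹) ^ 2 * (H / 2 - k⁻¹ / 2)⁻¹ * (B * (1 + μ * k⁻¹) * H) := by
  have hI := integral_verticalMode_sq_ge hk (cos_ne_zero_of_add_mul_tan_eq_zero hμ.ne' hdisp)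
    hηh hab
  have hfZ := abs_integral_mul_verticalMode_le (k := k) hηh hab hB
  rw [abs_tan_eq_of_add_mul_tan_eq_zero hμ.le hk hdisp] at hfZ
  rw [abs_mul, abs_mul, abs_neg, abs_of_pos (by positivity : 0 < (k ^ 2)⁻¹),
    abs_of_pos (inv_pos.2 (hcoer.trans_le hI)), inv_pow]
  gcongr

end verticalMode

/-- Assertion (ii) of Theorem 1 (with Eq. (2.15)): for a C² field `Φ*` satisfying the
same boundary conditions as the eigenfunctions, the modal amplitudes satisfy
`φₙ = −kₙ⁻² ‖Zₙ‖⁻² ∫ (Φ*)'' Zₙ` and decay as `O(n⁻²)`. -/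
theorem modal_amplitude_decay_n2
    (μ0 H h η : ℝ) (hμ0 : 0 < μ0) (hH : 0 < H) (hηh : η + h = H)
    (k : ℕ → ℝ)
    (hk : ∀ n : ℕ, 1 ≤ n →
      k n ∈ Set.Ioo ((2 * (n : ℝ) - 1) * π / (2 * H)) ((n : ℝ) * π / H) ∧
      μ0 + k n * Real.tan (k n * H) = 0)
    (Z : ℕ → ℝ → ℝ)
    (hZn : ∀ n : ℕ, 1 ≤ n → ∀ z, Z n z = Real.cos (k n * (z + h)) / Real.cos (k n * H))
    -- Φ* is twice continuously differentiable on [−h, η], with derivatives Φd, Φdd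
    (Φs Φd Φdd : ℝ → ℝ)
    (hΦd : ∀ z ∈ Set.Icc (-h) η, HasDerivWithinAt Φs (Φd z) (Set.Icc (-h) η) z)
    (hΦdd : ∀ z ∈ Set.Icc (-h) η, HasDerivWithinAt Φd (Φdd z) (Set.Icc (-h) η) z)
    (hΦddc : ContinuousOn Φdd (Set.Icc (-h) η))
    -- homogeneous boundary conditions
    (hbc1 : Φd η - μ0 * Φs η = 0)
    (hbc2 : Φd (-h) = 0)
    (φ : ℕ → ℝ)
    (hφ : ∀ n : ℕ, 1 ≤ n → φ n =
      (∫ z in (-h)..η, (Z n z) ^ 2)⁻¹ * ∫ z in (-h)..η, Φs z * Z n z) :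
    (∀ n : ℕ, 1 ≤ n → φ n =
      -((k n) ^ 2)⁻¹ * (∫ z in (-h)..η, (Z n z) ^ 2)⁻¹ *
        ∫ z in (-h)..η, Φdd z * Z n z) ∧
    ∃ A2 : ℝ, ∀ n : ℕ, 1 ≤ n → |φ n| ≤ A2 / (n : ℝ) ^ 2 := by
  have hab : -h ≤ η := by linarith
  have hZ : ∀ n, 1 ≤ n → Z n = verticalMode (k n) h H := fun n hn => funext (hZn n hn)
  have hamp : ∀ n, 1 ≤ n → φ n = -((k n) ^ 2)⁻¹ * (∫ z in (-h)..η, (Z n z) ^ 2)⁻¹ *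
      ∫ z in (-h)..η, Φdd z * Z n z := fun n hn => by
    have hk0 := (pos_and_inv_le_of_odd_mul_pi_div_lt hn hH (hk n hn).1.1).1.ne'
    rw [hφ n hn, hZ n hn, integral_deriv2_mul_verticalMode hμ0.ne' (hk n hn).2 hηh hab hΦd hΦdd
      hΦddc hbc2 (by linarith)]
    field_simp
  refine ⟨hamp, ?_⟩
  obtain ⟨B, hB⟩ := isCompact_Icc.exists_bound_of_continuousOn hΦddc
  have hB0 : 0 ≤ B := (norm_nonneg _).trans (hB _ (left_mem_Icc.mpr hab))
  set T := 2 * H / π with hTdef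
  have hTH : T < H := by rw [hTdef, div_lt_iff₀ pi_pos]; nlinarith [pi_gt_three]
  refine ⟨T ^ 2 * (H / 2 - T / 2)⁻¹ * (B * (1 + μ0 * T) * H), fun n hn => ?_⟩
  obtain ⟨hkpos, hkn⟩ := pos_and_inv_le_of_odd_mul_pi_div_lt hn hH (hk n hn).1.1
  have hkT : (k n)⁻¹ ≤ T := hkn.trans (div_le_self (by positivity) (by exact_mod_cast hn))
  have hcoer : 0 < H / 2 - (k n)⁻¹ / 2 := by linarith
  have hcoerT : 0 < H / 2 - T / 2 := by linarith
  rw [hamp n hn, hZ n hn]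
  calc _ ≤ ((k n)⁻¹) ^ 2 * (H / 2 - (k n)⁻¹ / 2)⁻¹ * (B * (1 + μ0 * (k n)⁻¹) * H) :=
        abs_verticalMode_coefficient_le hμ0 hkpos (hk n hn).2 hηh hab hcoer hB
    _ ≤ (T / n) ^ 2 * (H / 2 - T / 2)⁻¹ * (B * (1 + μ0 * T) * H) := by gcongr
    _ = _ := by ring
end

section
/- Fix real constants μ0 > 0 and H > 0, and for each integer n ≥ 1 let k_n(H) be the unique solution k of μ0 + k·tan(k·H) = 0 in ((2n−1)π/(2H), nπ/H), a differentiable function of H. Then one has the exact identity H·(dk_n/dH) + k_n = −μ0·k_n / (−μ0 + H·(k_n² + μ0²)), and consequently there exists a constant C > 0 such that |H·(dk_n/dH) + k_n| ≤ C/n for all n ≥ 1 (equivalently, the x-derivative ∂_x(k_n H) along any C¹ depth profile is O(n^{−1})). -/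
/-! The phase `θ = k H * H` solves `θ tan θ = -μ0 H`, and `x ↦ x tan x` is strictly increasing on
each branch `((2n-1)π/2, (2n+1)π/2)`, `n ≥ 1`, with derivative `mulTanDeriv θ ≥ 3θ/4`. Hence `θ`
is continuous in `H` and, by the inverse function theorem, `H k' + k = θ' = -μ0 / mulTanDeriv θ`.
On the dispersion relation `k tan θ = -μ0` one has `k · mulTanDeriv θ = -μ0 + H (k² + μ0²)`,
which gives the identity, while `mulTanDeriv θ ≥ 3θ/4 ≥ n` gives the bound with `C = μ0`. -/

open Real Topology Filter Set

lemma Real.cos_ne_zero_of_mem_Ioo {n : ℤ} {θ : ℝ}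
    (hθ : θ ∈ Ioo ((2 * n - 1) * π / 2) ((2 * n + 1) * π / 2)) : cos θ ≠ 0 := by
  rw [cos_ne_zero_iff]
  rintro m rfl
  obtain ⟨hlo, hhi⟩ := hθ
  have hlo' : ((2 * n - 1 : ℤ) : ℝ) < (2 * m + 1 : ℤ) := by
    push_cast; nlinarith [pi_pos]
  have hhi' : ((2 * m + 1 : ℤ) : ℝ) < (2 * n + 1 : ℤ) := by
    push_cast; nlinarith [pi_pos]
  norm_cast at hlo' hhi'
  omega

noncomputable def mulTanDeriv (θ : ℝ) : ℝ := tan θ + θ * (1 + tan θ ^ 2)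

lemma hasDerivAt_mul_tan {θ : ℝ} (h : cos θ ≠ 0) :
    HasDerivAt (fun x => x * tan x) (mulTanDeriv θ) θ := by
  refine ((hasDerivAt_id' θ).mul (hasDerivAt_tan h)).congr_deriv ?_
  rw [mulTanDeriv, tan_eq_sin_div_cos]
  field_simp
  linear_combination (-θ) * sin_sq_add_cos_sq θ

lemma three_div_four_mul_le_mulTanDeriv {θ : ℝ} (hθ : 1 ≤ θ) : 3 / 4 * θ ≤ mulTanDeriv θ := by
  rw [mulTanDeriv]
  nlinarith [sq_nonneg (2 * θ * tan θ + 1)]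

lemma mulTanDeriv_pos {θ : ℝ} (hθ : 1 ≤ θ) : 0 < mulTanDeriv θ := by
  linarith [three_div_four_mul_le_mulTanDeriv hθ]

lemma mul_mulTanDeriv_of_dispersion {μ0 k H : ℝ} (h : μ0 + k * tan (k * H) = 0) :
    k * mulTanDeriv (k * H) = -μ0 + H * (k ^ 2 + μ0 ^ 2) := by
  rw [mulTanDeriv]
  linear_combination (1 + H * (k * tan (k * H) - μ0)) * h

lemma strictMonoOn_mul_tan {n : ℤ} (hn : 0 < n) :
    StrictMonoOn (fun x => x * tan x) (Ioo ((2 * n - 1) * π / 2) ((2 * n + 1) * π / 2)) := by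
  have hn' : (1 : ℝ) ≤ n := by exact_mod_cast hn
  have hπ := pi_gt_three
  refine strictMonoOn_of_deriv_pos (convex_Ioo _ _)
    (fun θ hθ => (hasDerivAt_mul_tan (cos_ne_zero_of_mem_Ioo hθ)).continuousAt.continuousWithinAt)
    fun θ hθ => ?_
  rw [interior_Ioo] at hθ
  rw [(hasDerivAt_mul_tan (cos_ne_zero_of_mem_Ioo hθ)).deriv]
  exact mulTanDeriv_pos (by nlinarith [hθ.1])

lemma continuousAt_of_strictMonoOn_comp {α β γ : Type*} [TopologicalSpace α] [LinearOrder β]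
    [TopologicalSpace β] [OrderTopology β] [DenselyOrdered β] [LinearOrder γ] [TopologicalSpace γ]
    [OrderTopology γ] {f : β → γ} {g : α → β} {s : Set β} {x₀ : α}
    (hf : StrictMonoOn f s) (hs : s ∈ 𝓝 (g x₀)) (hgs : ∀ᶠ x in 𝓝 x₀, g x ∈ s)
    (hfg : ContinuousAt (fun x => f (g x)) x₀) : ContinuousAt g x₀ := by
  rw [ContinuousAt, tendsto_order]
  constructor
  · intro a ha
    obtain ⟨l, ⟨hal, hlg⟩, hls⟩ := exists_Ioc_subset_of_mem_nhds' hs ha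
    obtain ⟨a', hla', ha'g⟩ := exists_between hlg
    have ha's : a' ∈ s := hls ⟨hla', ha'g.le⟩
    have haa' : a < a' := hal.trans_lt hla'
    have hlt : f a' < f (g x₀) := hf ha's (mem_of_mem_nhds hs) ha'g
    filter_upwards [hgs, hfg.eventually (lt_mem_nhds hlt)] with x hxs hx
    by_contra! hle
    exact (hf.monotoneOn hxs ha's (hle.trans haa'.le)).not_gt hx
  · intro b hb
    obtain ⟨u, ⟨hgu, hub⟩, hus⟩ := exists_Ico_subset_of_mem_nhds' hs hb
    obtain ⟨b', hgb', hb'u⟩ := exists_between hgu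
    have hb's : b' ∈ s := hus ⟨hgb'.le, hb'u⟩
    have hb'b : b' < b := hb'u.trans_le hub
    have hlt : f (g x₀) < f b' := hf (mem_of_mem_nhds hs) hb's hgb'
    filter_upwards [hgs, hfg.eventually (gt_mem_nhds hlt)] with x hxs hx
    by_contra! hle
    exact (hf.monotoneOn hb's hxs (hb'b.le.trans hle)).not_gt hx

lemma hasDerivAt_of_comp_eventuallyEq_const_mul {𝕜 : Type*} [NontriviallyNormedField 𝕜]
    {f θ : 𝕜 → 𝕜} {f' c x₀ : 𝕜}
    (hθ : ContinuousAt θ x₀) (hf : HasDerivAt f f' (θ x₀)) (hf' : f' ≠ 0) (hc : c ≠ 0)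
    (hfθ : ∀ᶠ x in 𝓝 x₀, f (θ x) = c * x) : HasDerivAt θ (c / f') x₀ := by
  have hcancel : c * x₀ / c = x₀ := by field_simp
  have hdiv : Tendsto (fun y => y / c) (𝓝 (c * x₀)) (𝓝 x₀) :=
    (continuous_id.div_const c).tendsto' _ _ hcancel
  have hg : HasDerivAt (fun y => θ (y / c)) f'⁻¹ (c * x₀) := by
    refine .of_local_left_inverse
      (hθ.comp_of_eq (continuous_id.div_const c).continuousAt hcancel) (by rwa [hcancel]) hf' ?_
    filter_upwards [hdiv.eventually hfθ] with y hy
    rw [hy]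
    field_simp
  refine ((hg.comp x₀ ((hasDerivAt_id' x₀).const_mul c)).congr_of_eventuallyEq
    (Eventually.of_forall fun x => ?_)).congr_deriv ?_
  · simp [hc]
  · field_simp

lemma hasDerivAt_of_hasDerivAt_mul_id {𝕜 : Type*} [NontriviallyNormedField 𝕜] {g : 𝕜 → 𝕜} {d x : 𝕜}
    (hg : HasDerivAt (fun y => g y * y) d x) (hx : x ≠ 0) :
    HasDerivAt g ((d - g x) / x) x := by
  have hquot := hg.div (hasDerivAt_id x) hx
  refine (hquot.congr_of_eventuallyEq ?_).congr_deriv ?_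
  · filter_upwards [eventually_ne_nhds hx] with y hy
    simp [hy]
  · simp only [id]
    field_simp

def IsDispersionBranch (μ0 : ℝ) (n : ℕ) (k : ℝ → ℝ) : Prop :=
  ∀ H : ℝ, 0 < H → k H ∈ Ioo ((2 * (n : ℝ) - 1) * π / (2 * H)) ((n : ℝ) * π / H) ∧
    μ0 + k H * tan (k H * H) = 0

namespace IsDispersionBranch

variable {μ0 H : ℝ} {n : ℕ} {k : ℝ → ℝ}

lemma mul_mem_Ioo (hk : IsDispersionBranch μ0 n k) (hH : 0 < H) :
    k H * H ∈ Ioo ((2 * (n : ℝ) - 1) * π / 2) (n * π) := by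
  obtain ⟨⟨hlo, hhi⟩, -⟩ := hk H hH
  rw [← div_div, div_lt_iff₀ hH] at hlo
  rw [lt_div_iff₀ hH] at hhi
  exact ⟨hlo, hhi⟩

lemma one_le_mul (hk : IsDispersionBranch μ0 n k) (hn : 1 ≤ n) (hH : 0 < H) : 1 ≤ k H * H := by
  have hn' : (1 : ℝ) ≤ n := by exact_mod_cast hn
  nlinarith [(hk.mul_mem_Ioo hH).1, pi_gt_three]

lemma pos (hk : IsDispersionBranch μ0 n k) (hn : 1 ≤ n) (hH : 0 < H) : 0 < k H :=
  pos_of_mul_pos_left (by linarith [hk.one_le_mul hn hH]) hH.le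

lemma natCast_le_mulTanDeriv (hk : IsDispersionBranch μ0 n k) (hn : 1 ≤ n) (hH : 0 < H) :
    (n : ℝ) ≤ mulTanDeriv (k H * H) := by
  have hn' : (1 : ℝ) ≤ n := by exact_mod_cast hn
  nlinarith [(hk.mul_mem_Ioo hH).1, pi_gt_three,
    three_div_four_mul_le_mulTanDeriv (hk.one_le_mul hn hH)]

lemma hasDerivAt_mul (hk : IsDispersionBranch μ0 n k) (hμ0 : 0 < μ0) (hn : 1 ≤ n) (hH : 0 < H) :
    HasDerivAt (fun H => k H * H) (-μ0 / mulTanDeriv (k H * H)) H := by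
  set s := Ioo ((2 * ((n : ℤ) : ℝ) - 1) * π / 2) ((2 * ((n : ℤ) : ℝ) + 1) * π / 2)
  have hmem : ∀ H : ℝ, 0 < H → k H * H ∈ s := fun H hH => by
    obtain ⟨hlo, hhi⟩ := hk.mul_mem_Ioo hH
    exact ⟨by simpa using hlo, by push_cast; linarith [pi_pos]⟩
  have hsolve : ∀ᶠ H' in 𝓝 H, k H' * H' * tan (k H' * H') = -μ0 * H' := by
    filter_upwards [eventually_gt_nhds hH] with H' hH'
    linear_combination H' * (hk H' hH').2
  have hcont : ContinuousAt (fun H => k H * H) H :=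
    continuousAt_of_strictMonoOn_comp (strictMonoOn_mul_tan (by omega))
      (isOpen_Ioo.mem_nhds (hmem H hH)) ((eventually_gt_nhds hH).mono hmem)
      ((continuous_const.mul continuous_id).continuousAt.congr (hsolve.mono fun _ h => h.symm))
  exact hasDerivAt_of_comp_eventuallyEq_const_mul hcont
    (hasDerivAt_mul_tan (cos_ne_zero_of_mem_Ioo (hmem H hH)))
    (mulTanDeriv_pos (hk.one_le_mul hn hH)).ne' (neg_ne_zero.mpr hμ0.ne') hsolve

lemma mul_deriv_add_self (hk : IsDispersionBranch μ0 n k) (hμ0 : 0 < μ0) (hn : 1 ≤ n) (hH : 0 < H) :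
    H * deriv k H + k H = -μ0 / mulTanDeriv (k H * H) := by
  rw [(hasDerivAt_of_hasDerivAt_mul_id (hk.hasDerivAt_mul hμ0 hn hH) hH.ne').deriv]
  field_simp
  ring

end IsDispersionBranch

/-- The key cancellation identity behind Lemma A1 (Eqs. (A24a), (A27)):
`H·(dkₙ/dH) + kₙ = −μ₀kₙ/(−μ₀ + H(kₙ² + μ₀²))`, hence `|H·(dkₙ/dH) + kₙ| ≤ C/n`,
i.e. `∂ₓ(kₙH) = O(n⁻¹)` along any C¹ depth profile. -/
theorem eigenvalue_cancellation_identity (μ0 H : ℝ) (hμ0 : 0 < μ0) (hH : 0 < H)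
    (k : ℕ → ℝ → ℝ)
    (hk : ∀ n : ℕ, 1 ≤ n → ∀ H' : ℝ, 0 < H' →
      k n H' ∈ Set.Ioo ((2 * (n : ℝ) - 1) * π / (2 * H')) ((n : ℝ) * π / H') ∧
      μ0 + k n H' * Real.tan (k n H' * H') = 0) :
    (∀ n : ℕ, 1 ≤ n →
      H * deriv (k n) H + k n H =
        -(μ0 * k n H) / (-μ0 + H * ((k n H) ^ 2 + μ0 ^ 2))) ∧
    ∃ C : ℝ, 0 < C ∧ ∀ n : ℕ, 1 ≤ n →
      |H * deriv (k n) H + k n H| ≤ C / n := by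
  refine ⟨fun n hn => ?_, μ0, hμ0, fun n hn => ?_⟩
  · have hkn : IsDispersionBranch μ0 n (k n) := hk n hn
    rw [hkn.mul_deriv_add_self hμ0 hn hH, ← mul_mulTanDeriv_of_dispersion (hkn H hH).2, neg_div,
      neg_div, mul_comm μ0, mul_div_mul_left _ _ (hkn.pos hn hH).ne']
  · have hkn : IsDispersionBranch μ0 n (k n) := hk n hn
    have hslope := hkn.natCast_le_mulTanDeriv hn hH
    have hn' : (0 : ℝ) < n := by exact_mod_cast hn
    rw [hkn.mul_deriv_add_self hμ0 hn hH, abs_div, abs_neg, abs_of_pos hμ0,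
      abs_of_pos (hn'.trans_le hslope)]
    exact div_le_div_of_nonneg_left hμ0.le hn' hslope
end
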